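/- arXiv:1412.0515 — 2 statements merged into one kernel-verified Lean document; each statement's English description precedes it below -/
import Mathlib

section
/- Let k be a positive integer. If G is a finite simple graph of order n with maximum degree Δ, then the k-domination number satisfies γ_k(G) ≥ k·n/(Δ + k). -/
open Finset

/-- A set `S` of vertices is a `(k,k',k'')`-dominating set if every vertex in `S` has at
least `k` neighbors in `S`, and every vertex not in `S` has at least `k'` neighbors in `S`
and at least `k''` neighbors outside `S`. -/
def SimpleGraph.IsKkkDomSet {V : Type*} [Fintype V] [DecidableEq V] (G : SimpleGraph V)
    [DecidableRel G.Adj] (k k' k'' : ℕ) (S : Finset V) : Prop :=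
  (∀ v ∈ S, k ≤ (G.neighborFinset v ∩ S).card) ∧
  (∀ v ∉ S, k' ≤ (G.neighborFinset v ∩ S).card ∧ k'' ≤ (G.neighborFinset v \ S).card)

/-- The `(k,k',k'')`-domination number: the minimum cardinality of a
`(k,k',k'')`-dominating set. -/
noncomputable def SimpleGraph.kkkDomNum {V : Type*} [Fintype V] [DecidableEq V]
    (G : SimpleGraph V) [DecidableRel G.Adj] (k k' k'' : ℕ) : ℕ :=
  sInf {n | ∃ S : Finset V, G.IsKkkDomSet k k' k'' S ∧ S.card = n}

/-! Count the edges between a `(0,k,0)`-dominating set `S` and its complement: each of the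
`n - |S|` outside vertices sends at least `k` of them into `S`, and each vertex of `S` receives at
most `Δ`, so `k (n - |S|) ≤ Δ |S|`, i.e. `k n ≤ (Δ + k) |S|`. -/

namespace SimpleGraph

variable {V : Type*} [Fintype V] [DecidableEq V] (G : SimpleGraph V) [DecidableRel G.Adj]

theorem sum_card_neighborFinset_inter_comm (S T : Finset V) :
    ∑ v ∈ T, #(G.neighborFinset v ∩ S) = ∑ s ∈ S, #(G.neighborFinset s ∩ T) := by
  have h (A : Finset V) (v : V) : G.neighborFinset v ∩ A = A.bipartiteAbove G.Adj v := by
    ext; simp [Finset.bipartiteAbove, and_comm]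
  simp only [h]
  rw [sum_card_bipartiteAbove_eq_sum_card_bipartiteBelow]
  exact sum_congr rfl fun s _ => congrArg card (filter_congr fun v _ => G.adj_comm v s)

theorem mul_card_compl_le_maxDegree_mul_card {k : ℕ} {S : Finset V}
    (hS : ∀ v ∉ S, k ≤ #(G.neighborFinset v ∩ S)) : k * #Sᶜ ≤ G.maxDegree * #S :=
  calc k * #Sᶜ ≤ ∑ v ∈ Sᶜ, #(G.neighborFinset v ∩ S) := by
        rw [mul_comm]
        exact card_nsmul_le_sum _ _ _ fun v hv => hS v (mem_compl.mp hv)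
    _ = ∑ s ∈ S, #(G.neighborFinset s ∩ Sᶜ) := G.sum_card_neighborFinset_inter_comm S Sᶜ
    _ ≤ ∑ _s ∈ S, G.maxDegree := sum_le_sum fun s _ =>
        (card_le_card inter_subset_left).trans <|
          (G.card_neighborFinset_eq_degree s).trans_le (G.degree_le_maxDegree s)
    _ = G.maxDegree * #S := by rw [sum_const, smul_eq_mul, mul_comm]

theorem IsKkkDomSet.mul_card_le {k k' k'' : ℕ} {S : Finset V}
    (hS : G.IsKkkDomSet k k' k'' S) : k' * Fintype.card V ≤ (G.maxDegree + k') * #S := by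
  have hcompl := G.mul_card_compl_le_maxDegree_mul_card fun v hv => (hS.2 v hv).1
  rw [← card_add_card_compl S]
  linarith

theorem isKkkDomSet_univ (k' k'' : ℕ) : G.IsKkkDomSet 0 k' k'' univ :=
  ⟨fun _ _ => Nat.zero_le _, fun v hv => absurd (mem_univ v) hv⟩

theorem exists_isKkkDomSet_card_eq_kkkDomNum {k k' k'' : ℕ}
    (h : ∃ S, G.IsKkkDomSet k k' k'' S) :
    ∃ S, G.IsKkkDomSet k k' k'' S ∧ #S = G.kkkDomNum k k' k'' :=
  let ⟨S, hS⟩ := h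
  Nat.sInf_mem (s := {n | ∃ S, G.IsKkkDomSet k k' k'' S ∧ #S = n}) ⟨#S, S, hS, rfl⟩

theorem mul_card_le_kkkDomNum_zero (k' k'' : ℕ) :
    k' * Fintype.card V ≤ (G.maxDegree + k') * G.kkkDomNum 0 k' k'' := by
  obtain ⟨S, hS, hcard⟩ :=
    G.exists_isKkkDomSet_card_eq_kkkDomNum ⟨univ, G.isKkkDomSet_univ k' k''⟩
  exact hcard ▸ hS.mul_card_le

end SimpleGraph

theorem stmt_7_general {V : Type*} [Fintype V] [DecidableEq V] (G : SimpleGraph V)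
    [DecidableRel G.Adj] (k : ℕ) :
    (k : ℝ) * Fintype.card V / ((G.maxDegree : ℝ) + k) ≤ G.kkkDomNum 0 k 0 :=
  div_le_of_le_mul₀ (by positivity) (by positivity) <| by
    exact_mod_cast (G.mul_card_le_kkkDomNum_zero k 0).trans_eq (mul_comm _ _)

/-- If k ≥ 1, then γ_k(G) = γ_{(0,k,0)}(G) ≥ k·n/(Δ + k). -/
theorem stmt_7 {V : Type*} [Fintype V] [DecidableEq V] (G : SimpleGraph V)
    [DecidableRel G.Adj] (k : ℕ) (hk : 1 ≤ k) :
    (k : ℝ) * Fintype.card V / ((G.maxDegree : ℝ) + k) ≤ G.kkkDomNum 0 k 0 :=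
  stmt_7_general G k
end

section
/- Let k and k' be positive integers and let n ≥ max{k, k'} + 3. Then the complete graph K_n satisfies γ_{(k,k',1)}(K_n) = max{k, k' − 1} + 1; in particular, the upper bound γ_{(k,k',1)}(G) ≤ n − δ(G) + max{k, k' − 1} is attained by K_n. -/
open Finset

/-!
In `K_n` a vertex of `S` has `#S - 1` neighbours in `S`, and a vertex outside `S` has `#S`
neighbours in `S` and `n - #S - 1` outside. So being a `(k,k',k'')`-dominating set depends only on
`#S`: a nonempty `S` needs `#S ≥ k + 1`, a proper one needs `k' ≤ #S < n - k''`. Since `k' ≥ 1`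
excludes `S = ∅`, the least admissible size is `max (k + 1) k' = max k (k' - 1) + 1`, which is
still proper as long as `n` is large enough.
-/

namespace SimpleGraph

variable {V : Type*} [Fintype V] [DecidableEq V]

section DominationNumber

variable {G : SimpleGraph V} [DecidableRel G.Adj] {k k' k'' : ℕ}

lemma kkkDomNum_le_card {S : Finset V} (hS : G.IsKkkDomSet k k' k'' S) :
    G.kkkDomNum k k' k'' ≤ #S :=
  Nat.sInf_le ⟨S, hS, rfl⟩

lemma le_kkkDomNum {m : ℕ} (hex : ∃ S, G.IsKkkDomSet k k' k'' S)
    (hle : ∀ S, G.IsKkkDomSet k k' k'' S → m ≤ #S) : m ≤ G.kkkDomNum k k' k'' := by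
  obtain ⟨S, hS⟩ := hex
  exact le_csInf ⟨#S, S, hS, rfl⟩ fun _ ⟨T, hT, hcard⟩ => hcard ▸ hle T hT

end DominationNumber

section CompleteGraph

variable {S : Finset V} {v : V}

lemma card_neighborFinset_top_inter_of_mem (hv : v ∈ S) :
    #((⊤ : SimpleGraph V).neighborFinset v ∩ S) = #S - 1 := by
  rw [neighborFinset_top, inter_comm, ← sdiff_eq_inter_compl, sdiff_singleton_eq_erase,
    card_erase_of_mem hv]

lemma card_neighborFinset_top_inter_of_notMem (hv : v ∉ S) :
    #((⊤ : SimpleGraph V).neighborFinset v ∩ S) = #S := by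
  rw [neighborFinset_top, inter_comm, ← sdiff_eq_inter_compl, sdiff_singleton_eq_erase,
    erase_eq_of_notMem hv]

lemma card_neighborFinset_top_sdiff_of_notMem (hv : v ∉ S) :
    #((⊤ : SimpleGraph V).neighborFinset v \ S) = Fintype.card V - (#S + 1) := by
  rw [neighborFinset_top, sdiff_eq_inter_compl, ← compl_union, card_compl, ← insert_eq,
    card_insert_of_notMem hv]

lemma isKkkDomSet_top_iff {k k' k'' : ℕ} :
    (⊤ : SimpleGraph V).IsKkkDomSet k k' k'' S ↔
      (S.Nonempty → k < #S) ∧ (S ≠ univ → k' ≤ #S ∧ #S + k'' < Fintype.card V) := by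
  constructor
  · rintro ⟨hin, hout⟩
    refine ⟨fun ⟨v, hv⟩ => ?_, fun hne => ?_⟩
    · have hk := hin v hv
      rw [card_neighborFinset_top_inter_of_mem hv] at hk
      have hpos := card_pos.2 ⟨v, hv⟩
      omega
    · obtain ⟨v, -, hv⟩ := exists_of_ssubset (ssubset_univ_iff.2 hne)
      have hk' := hout v hv
      rw [card_neighborFinset_top_inter_of_notMem hv,
        card_neighborFinset_top_sdiff_of_notMem hv] at hk'
      have hlt := card_lt_univ_of_notMem hv
      omega
  · rintro ⟨hin, hout⟩
    refine ⟨fun v hv => ?_, fun v hv => ?_⟩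
    · rw [card_neighborFinset_top_inter_of_mem hv]
      have hk := hin ⟨v, hv⟩
      omega
    · have hne : S ≠ univ := fun h => hv (h ▸ mem_univ v)
      rw [card_neighborFinset_top_inter_of_notMem hv, card_neighborFinset_top_sdiff_of_notMem hv]
      have hk' := hout hne
      omega

theorem kkkDomNum_top {k k' k'' : ℕ} (hk' : 1 ≤ k')
    (hV : max k (k' - 1) + 1 + k'' < Fintype.card V) :
    (⊤ : SimpleGraph V).kkkDomNum k k' k'' = max k (k' - 1) + 1 := by
  obtain ⟨S, -, hS⟩ := exists_subset_card_eq (s := (univ : Finset V)) (n := max k (k' - 1) + 1)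
    (by rw [card_univ]; omega)
  have hdom : (⊤ : SimpleGraph V).IsKkkDomSet k k' k'' S :=
    isKkkDomSet_top_iff.2 ⟨fun _ => by omega, fun _ => by omega⟩
  refine le_antisymm (hS ▸ kkkDomNum_le_card hdom) (le_kkkDomNum ⟨S, hdom⟩ fun T hT => ?_)
  obtain ⟨hin, hout⟩ := isKkkDomSet_top_iff.1 hT
  rcases eq_or_ne T univ with rfl | hne
  · rw [card_univ]
    omega
  · have hproper := hout hne
    have hnonempty := hin (card_pos.1 (by omega))
    omega

end CompleteGraph

end SimpleGraph

theorem stmt_11_general (k k' n : ℕ) (hk' : 1 ≤ k') (hn : max k k' + 3 ≤ n) :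
    (⊤ : SimpleGraph (Fin n)).kkkDomNum k k' 1 = max k (k' - 1) + 1 ∧
    (⊤ : SimpleGraph (Fin n)).kkkDomNum k k' 1 =
      Fintype.card (Fin n) - (⊤ : SimpleGraph (Fin n)).minDegree + max k (k' - 1) := by
  have hγ := SimpleGraph.kkkDomNum_top (V := Fin n) (k := k) (k'' := 1) hk' (by
    rw [Fintype.card_fin]
    omega)
  refine ⟨hγ, ?_⟩
  rw [hγ, SimpleGraph.minDegree_top, Fintype.card_fin]
  omega

/-- For k, k' ≥ 1 and n ≥ max{k,k'} + 3, the complete graph K_n satisfies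
γ_{(k,k',1)}(K_n) = max{k, k'−1} + 1; in particular the bound
γ_{(k,k',1)}(G) ≤ n − δ(G) + max{k, k'−1} is attained by K_n. -/
theorem stmt_11 (k k' n : ℕ) (hk : 1 ≤ k) (hk' : 1 ≤ k') (hn : max k k' + 3 ≤ n) :
    (⊤ : SimpleGraph (Fin n)).kkkDomNum k k' 1 = max k (k' - 1) + 1 ∧
    (⊤ : SimpleGraph (Fin n)).kkkDomNum k k' 1 =
      Fintype.card (Fin n) - (⊤ : SimpleGraph (Fin n)).minDegree + max k (k' - 1) :=
  stmt_11_general k k' n hk' hn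
end
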